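/- arXiv:2603.24189 — 3 statements merged into one kernel-verified Lean document; each statement's English description precedes it below -/
import Mathlib

section
/- Let n ≥ 1, let ω : Fin n → ℝ with ω_j ≠ 0 for all j, let M = diag(ω), and let D, B be n×n real matrices such that M D + (M D)ᵀ = B and every row of D sums to zero. Then for every f : Fin n → ℝ^m and every j, ((M⁻¹ Dᵀ M) f)_j = ((M⁻¹ B) f)_j − ∑_k D_{jk} (f_j + f_k). In other words, the weak-form volume term is equivalent to the flux-differencing volume term −2 ∑_k D_{jk} · (1/2)(f_j + f_k) with the central two-point flux, up to the boundary correction M⁻¹ B f. -/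
/-! Because `M` is symmetric, the SBP property gives `M⁻¹ B = D + M⁻¹ Dᵀ M`, so the weak-form
term is `M⁻¹ B f - D f`; and `∑ₖ D_{jk} f_j = 0` since the rows of `D` sum to zero, so
`(D f)_j = ∑ₖ D_{jk} (f_j + f_k)`. -/

open Matrix

open Finset

theorem Finset.sum_smul_add_eq_sum_smul_of_sum_eq_zero {ι R V : Type*} [Fintype ι]
    [Semiring R] [AddCommMonoid V] [Module R V] {a : ι → R} (ha : ∑ k, a k = 0)
    (x : V) (v : ι → V) : ∑ k, a k • (x + v k) = ∑ k, a k • v k := by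
  simp only [smul_add, sum_add_distrib, ← sum_smul, ha, zero_smul, zero_add]

theorem Matrix.nonsing_inv_mul_mul_add_transpose_mul {ι K : Type*} [Fintype ι] [DecidableEq ι]
    [CommRing K] {M : Matrix ι ι K} (hM : Mᵀ = M) (hdet : IsUnit M.det) (D : Matrix ι ι K) :
    M⁻¹ * (M * D + (M * D)ᵀ) = D + M⁻¹ * Dᵀ * M := by
  rw [transpose_mul, hM, mul_add, ← Matrix.mul_assoc, nonsing_inv_mul M hdet, Matrix.one_mul,
    Matrix.mul_assoc]

theorem weak_form_eq_flux_differencing_central_general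
    (n m : ℕ) (ω : Fin n → ℝ) (hω : ∀ j, ω j ≠ 0)
    (D B : Matrix (Fin n) (Fin n) ℝ)
    (hSBP : Matrix.diagonal ω * D + (Matrix.diagonal ω * D)ᵀ = B)
    (hD : ∀ j, ∑ k, D j k = 0) (f : Fin n → (Fin m → ℝ)) :
    ∀ j, (∑ k, ((Matrix.diagonal ω)⁻¹ * Dᵀ * Matrix.diagonal ω) j k • f k)
        = (∑ k, ((Matrix.diagonal ω)⁻¹ * B) j k • f k)
          - ∑ k, D j k • (f j + f k) := by
  intro j
  have hdet : IsUnit (diagonal ω).det := by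
    rw [det_diagonal, isUnit_iff_ne_zero]
    exact prod_ne_zero_iff.mpr fun i _ => hω i
  rw [← hSBP, nonsing_inv_mul_mul_add_transpose_mul (diagonal_transpose ω) hdet,
    sum_smul_add_eq_sum_smul_of_sum_eq_zero (hD j)]
  simp only [Matrix.add_apply, add_smul, sum_add_distrib, add_sub_cancel_left]

/-- For a diagonal mass matrix `M = diag ω` with nonzero weights, an SBP pair `(M*D, B)`
and a derivative matrix `D` whose rows sum to zero, the weak-form volume term
`(M⁻¹ Dᵀ M) f` equals the boundary contribution `(M⁻¹ B) f` minus the flux-differencing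
volume term with the central two-point flux, nodewise. -/
theorem weak_form_eq_flux_differencing_central
    (n m : ℕ) (hn : 1 ≤ n) (ω : Fin n → ℝ) (hω : ∀ j, ω j ≠ 0)
    (D B : Matrix (Fin n) (Fin n) ℝ)
    (hSBP : Matrix.diagonal ω * D + (Matrix.diagonal ω * D)ᵀ = B)
    (hD : ∀ j, ∑ k, D j k = 0) (f : Fin n → (Fin m → ℝ)) :
    ∀ j, (∑ k, ((Matrix.diagonal ω)⁻¹ * Dᵀ * Matrix.diagonal ω) j k • f k)
        = (∑ k, ((Matrix.diagonal ω)⁻¹ * B) j k • f k)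
          - ∑ k, D j k • (f j + f k) :=
  weak_form_eq_flux_differencing_central_general n m ω hω D B hSBP hD f
end

section
/- Let p ≥ 1 and let Q be a (p+1)×(p+1) real matrix satisfying the SBP property Q + Qᵀ = B, where B is the boundary matrix, and whose rows sum to zero (Q applied to the all-ones vector is zero). Let u : Fin (p+1) → ℝ^m be nodal states, let w : ℝ^m → ℝ^m and ψ : ℝ^m → ℝ, and let F : ℝ^m × ℝ^m → ℝ^m be a symmetric two-point flux satisfying Tadmor's entropy-conservation condition ⟨w(a) − w(b), F(a,b)⟩ = ψ(a) − ψ(b) for all a, b ∈ ℝ^m. Then the entropy production of the flux-differencing volume term equals the surface difference of the entropy potential: −∑_{j=0}^{p} ∑_{k=0}^{p} (2Q − B)_{jk} ⟨w(u_j), F(u_j, u_k)⟩ = ψ(u_p) − ψ(u_0). -/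
open Matrix

open Finset
open scoped RealInnerProductSpace

/-- The boundary matrix of a nodal DG scheme on `p+1` nodes: diagonal with entries
`-1` at the first node, `1` at the last node, and `0` elsewhere. -/
def boundaryMatrix (p : ℕ) : Matrix (Fin (p + 1)) (Fin (p + 1)) ℝ :=
  Matrix.diagonal fun i => if i = 0 then (-1 : ℝ) else if i = Fin.last p then 1 else 0

/-! The SBP property makes `S = 2Q - B` skew-symmetric, and a double sum `∑ⱼₖ Sⱼₖ gⱼₖ`
against a skew-symmetric matrix only sees the antisymmetric part `gⱼₖ - gₖⱼ` of the kernel.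
For `gⱼₖ = ⟪w(uⱼ), F(uⱼ, uₖ)⟫` and symmetric `F` this part is `⟪w(uⱼ) - w(uₖ), F(uⱼ, uₖ)⟫`,
which Tadmor's condition turns into `ψ(uⱼ) - ψ(uₖ)`, the antisymmetric part of `ψ(uⱼ)`.
So the entropy production is `-∑ⱼ (∑ₖ Sⱼₖ) ψ(uⱼ)`, and since `Q` has zero row sums the row
sums of `S` are `-Bⱼⱼ`, leaving only the boundary values of `ψ`. -/

section SkewSymmetric

variable {ι : Type*} [Fintype ι] {S : Matrix ι ι ℝ}

theorem sum_sum_skew_mul_symm_eq_zero (hS : Sᵀ = -S) {d : ι → ι → ℝ}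
    (hd : ∀ j k, d j k = d k j) : ∑ j, ∑ k, S j k * d j k = 0 := by
  have hskew (j k : ι) : S k j = -S j k := by
    rw [← Matrix.transpose_apply S j k, hS, Matrix.neg_apply]
  have hswap : ∑ j, ∑ k, S j k * d j k = ∑ j, ∑ k, -(S j k * d j k) := by
    rw [Finset.sum_comm]
    refine Finset.sum_congr rfl fun j _ => Finset.sum_congr rfl fun k _ => ?_
    rw [hskew j k, hd k j, neg_mul]
  simp only [Finset.sum_neg_distrib] at hswap
  linarith

theorem sum_sum_skew_mul_congr (hS : Sᵀ = -S) {g h : ι → ι → ℝ}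
    (hgh : ∀ j k, g j k - g k j = h j k - h k j) :
    ∑ j, ∑ k, S j k * g j k = ∑ j, ∑ k, S j k * h j k := by
  have hzero := sum_sum_skew_mul_symm_eq_zero hS (d := fun j k => g j k - h j k)
    fun j k => by linarith [hgh j k]
  simp only [mul_sub, Finset.sum_sub_distrib] at hzero
  linarith

theorem sum_sum_skew_mul_inner_flux {α E : Type*} [NormedAddCommGroup E]
    [InnerProductSpace ℝ E] (hS : Sᵀ = -S) (u : ι → α) (w : α → E) (ψ : α → ℝ)
    {F : α → α → E} (hFsym : ∀ a b, F a b = F b a)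
    (hFEC : ∀ a b, ⟪w a - w b, F a b⟫ = ψ a - ψ b) :
    ∑ j, ∑ k, S j k * ⟪w (u j), F (u j) (u k)⟫ = ∑ j, (∑ k, S j k) * ψ (u j) := by
  rw [sum_sum_skew_mul_congr hS (h := fun j _ => ψ (u j))]
  · simp only [Finset.sum_mul]
  · intro j k
    rw [hFsym (u k) (u j), ← inner_sub_left, hFEC]

end SkewSymmetric

section BoundaryMatrix

theorem boundaryMatrix_transpose (p : ℕ) : (boundaryMatrix p)ᵀ = boundaryMatrix p :=
  Matrix.diagonal_transpose _

theorem sum_boundaryMatrix_row (p : ℕ) (j : Fin (p + 1)) :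
    ∑ k, boundaryMatrix p j k = boundaryMatrix p j j := by
  simp [boundaryMatrix, Matrix.diagonal_apply]

theorem sum_boundaryMatrix_diag_mul {p : ℕ} (hp : 1 ≤ p) (f : Fin (p + 1) → ℝ) :
    ∑ j, boundaryMatrix p j j * f j = f (Fin.last p) - f 0 := by
  have hne : (0 : Fin (p + 1)) ≠ Fin.last p :=
    Fin.ne_of_val_ne (by rw [Fin.val_zero, Fin.val_last]; omega)
  rw [Finset.sum_eq_add_of_mem 0 (Fin.last p) (mem_univ _) (mem_univ _) hne
    fun j _ hj => by simp [boundaryMatrix, hj.1, hj.2]]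
  simp only [boundaryMatrix, diagonal_apply_eq, if_pos, hne.symm, if_false]
  ring

end BoundaryMatrix

section SBP

variable {p : ℕ} {Q : Matrix (Fin (p + 1)) (Fin (p + 1)) ℝ}

theorem transpose_two_smul_sub_boundaryMatrix (hSBP : Q + Qᵀ = boundaryMatrix p) :
    ((2 : ℝ) • Q - boundaryMatrix p)ᵀ = -((2 : ℝ) • Q - boundaryMatrix p) := by
  have hQt : Qᵀ = boundaryMatrix p - Q := eq_sub_of_add_eq' hSBP
  rw [Matrix.transpose_sub, Matrix.transpose_smul, boundaryMatrix_transpose, hQt]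
  module

theorem sum_two_smul_sub_boundaryMatrix_row (hQ : ∀ j, ∑ k, Q j k = 0) (j : Fin (p + 1)) :
    ∑ k, ((2 : ℝ) • Q - boundaryMatrix p) j k = -boundaryMatrix p j j := by
  simp only [Matrix.sub_apply, Matrix.smul_apply, smul_eq_mul, Finset.sum_sub_distrib,
    ← Finset.mul_sum, hQ j, sum_boundaryMatrix_row]
  ring

end SBP

/-- For an SBP operator `Q` (`Q + Qᵀ = B`) whose rows sum to zero and a symmetric
two-point flux `F` satisfying Tadmor's entropy-conservation condition, the entropy
production of the flux-differencing volume term equals the surface difference of the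
entropy potential `ψ`. -/
theorem flux_differencing_entropy_production
    (p m : ℕ) (hp : 1 ≤ p) (Q : Matrix (Fin (p + 1)) (Fin (p + 1)) ℝ)
    (hSBP : Q + Qᵀ = boundaryMatrix p) (hQ : ∀ j, ∑ k, Q j k = 0)
    (u : Fin (p + 1) → EuclideanSpace ℝ (Fin m))
    (w : EuclideanSpace ℝ (Fin m) → EuclideanSpace ℝ (Fin m))
    (ψ : EuclideanSpace ℝ (Fin m) → ℝ)
    (F : EuclideanSpace ℝ (Fin m) → EuclideanSpace ℝ (Fin m) → EuclideanSpace ℝ (Fin m))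
    (hFsym : ∀ a b, F a b = F b a)
    (hFEC : ∀ a b, ⟪w a - w b, F a b⟫ = ψ a - ψ b) :
    -∑ j, ∑ k, ((2 : ℝ) • Q - boundaryMatrix p) j k * ⟪w (u j), F (u j) (u k)⟫
      = ψ (u (Fin.last p)) - ψ (u 0) := by
  rw [sum_sum_skew_mul_inner_flux (transpose_two_smul_sub_boundaryMatrix hSBP) u w ψ hFsym
    hFEC, ← sum_boundaryMatrix_diag_mul hp (fun j => ψ (u j)), ← Finset.sum_neg_distrib]
  simp only [sum_two_smul_sub_boundaryMatrix_row hQ, neg_mul, neg_neg]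
end

section
/- Consider a one-dimensional periodic mesh of N ≥ 1 elements indexed by i ∈ ℤ/Nℤ, each with p+1 nodes (p ≥ 1). Let u_{i,j} ∈ ℝ^m be nodal states, w : ℝ^m → ℝ^m, ψ : ℝ^m → ℝ, and let f* : ℝ^m × ℝ^m → ℝ^m be an entropy-stable interface flux, i.e. ⟨w(b) − w(a), f*(a,b)⟩ ≤ ψ(b) − ψ(a) for all a, b. For each element i let V_{i} : Fin (p+1) → ℝ^m be ANY volume-term contribution satisfying the cell entropy inequality ∑_{j} ⟨w(u_{i,j}), V_{i,j}⟩ ≤ ψ(u_{i,p}) − ψ(u_{i,0}). Define r_{i,j} := s_{i,j} + V_{i,j}, where s_{i,0} = f*(u_{i−1,p}, u_{i,0}), s_{i,p} = −f*(u_{i,p}, u_{i+1,0}), and s_{i,j} = 0 for 0 < j < p. Then the total entropy production is nonpositive: ∑_{i} ∑_{j} ⟨w(u_{i,j}), r_{i,j}⟩ ≤ 0. In particular, the v-adaptive scheme in which each element uses either the entropy-conservative flux-differencing volume term or the weak-form volume term whenever the latter produces less entropy is globally entropy-stable. -/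
/-!
Each element contributes, by the cell entropy inequality, at most the jump of `ψ - ⟪w, f*⟫`
between its two boundary nodes, the flux being the one on the adjacent interface. By
periodicity these contributions regroup interface by interface, and at each interface the
regrouped term is the entropy production of `f*`, which is nonpositive.
-/

open Finset
open scoped RealInnerProductSpace

section

variable {E : Type*} [NormedAddCommGroup E] [InnerProductSpace ℝ E]

/-- The paper's `s_{i,·}`, with `fL = f*(u_{i-1,p}, u_{i,0})` and `fR = f*(u_{i,p}, u_{i+1,0})`. -/
def surfaceTerm (p : ℕ) (fL fR : E) (j : Fin (p + 1)) : E :=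
  if j = 0 then fL else if j = Fin.last p then -fR else 0

lemma sum_inner_surfaceTerm {p : ℕ} (hp : p ≠ 0) (a : Fin (p + 1) → E) (fL fR : E) :
    ∑ j, ⟪a j, surfaceTerm p fL fR j⟫ = ⟪a 0, fL⟫ - ⟪a (Fin.last p), fR⟫ := by
  have hlast : (0 : Fin (p + 1)) ≠ Fin.last p := by
    simpa [Fin.ext_iff] using hp.symm
  rw [Fintype.sum_eq_add 0 (Fin.last p) hlast fun j hj => by simp [surfaceTerm, hj.1, hj.2]]
  simp [surfaceTerm, hlast.symm, inner_neg_right, sub_eq_add_neg]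

lemma cell_entropy_production_le {p : ℕ} (hp : p ≠ 0) (w : E → E) (ψ : E → ℝ)
    (u V : Fin (p + 1) → E) (hV : ∑ j, ⟪w (u j), V j⟫ ≤ ψ (u (Fin.last p)) - ψ (u 0))
    (fL fR : E) :
    ∑ j, ⟪w (u j), surfaceTerm p fL fR j + V j⟫ ≤
      (ψ (u (Fin.last p)) - ⟪w (u (Fin.last p)), fR⟫) - (ψ (u 0) - ⟪w (u 0), fL⟫) := by
  simp only [inner_add_right, sum_add_distrib]
  rw [sum_inner_surfaceTerm hp (fun j => w (u j))]
  linarith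

lemma entropy_production_nonpos_of_entropyStable {w : E → E} {ψ : E → ℝ} {fstar : E → E → E}
    (hfstar : ∀ a b, ⟪w b - w a, fstar a b⟫ ≤ ψ b - ψ a) (a b : E) :
    (ψ a - ⟪w a, fstar a b⟫) - (ψ b - ⟪w b, fstar a b⟫) ≤ 0 := by
  have := hfstar a b
  rw [inner_sub_left] at this
  linarith

end

/-- On a periodic 1D mesh of `N` elements, any DG scheme whose volume-term contributions
`V i` satisfy the cell entropy inequality on every element, combined with an
entropy-stable interface flux `fstar`, has nonpositive total entropy production.
In particular, the v-adaptive scheme (selecting per element the entropy-conservative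
flux-differencing volume term, or the weak-form volume term whenever it produces less
entropy) is globally entropy-stable. -/
theorem periodic_cell_entropy_inequality_entropy_stability
    (N p m : ℕ) [NeZero N] (hp : 1 ≤ p)
    (u : ZMod N → Fin (p + 1) → EuclideanSpace ℝ (Fin m))
    (w : EuclideanSpace ℝ (Fin m) → EuclideanSpace ℝ (Fin m))
    (ψ : EuclideanSpace ℝ (Fin m) → ℝ)
    (fstar : EuclideanSpace ℝ (Fin m) → EuclideanSpace ℝ (Fin m) → EuclideanSpace ℝ (Fin m))
    (hfstarES : ∀ a b, ⟪w b - w a, fstar a b⟫ ≤ ψ b - ψ a)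
    (V : ZMod N → Fin (p + 1) → EuclideanSpace ℝ (Fin m))
    (hV : ∀ i, ∑ j, ⟪w (u i j), V i j⟫ ≤ ψ (u i (Fin.last p)) - ψ (u i 0)) :
    ∑ i : ZMod N, ∑ j : Fin (p + 1),
      ⟪w (u i j),
        (if j = 0 then fstar (u (i - 1) (Fin.last p)) (u i 0)
          else if j = Fin.last p then -fstar (u i (Fin.last p)) (u (i + 1) 0)
          else 0)
        + V i j⟫ ≤ 0 := by
  set right : ZMod N → ℝ := fun i =>
    ψ (u i (Fin.last p)) - ⟪w (u i (Fin.last p)), fstar (u i (Fin.last p)) (u (i + 1) 0)⟫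
  set left : ZMod N → ℝ := fun i =>
    ψ (u i 0) - ⟪w (u i 0), fstar (u (i - 1) (Fin.last p)) (u i 0)⟫
  calc _ ≤ ∑ i, (right i - left i) :=
        sum_le_sum fun i _ => cell_entropy_production_le (by omega) w ψ (u i) (V i) (hV i) _ _
    _ = ∑ i, (right (i - 1) - left i) := by
        rw [sum_sub_distrib (f := right), sum_sub_distrib (f := fun i => right (i - 1)),
          ← (Equiv.subRight 1).sum_comp right]
        rfl
    _ ≤ 0 := sum_nonpos fun i _ => by
        simpa only [right, left, sub_add_cancel] using
          entropy_production_nonpos_of_entropyStable hfstarES (u (i - 1) (Fin.last p)) (u i 0)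
end
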